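/- arXiv:1810.05042 — 2 statements merged into one kernel-verified Lean document; each statement's English description precedes it below -/
import Mathlib

section
/- Let ε_i, ε_j, ε_{j'} be three mutually independent random vectors in ℝ^p with i.i.d. N(0,σ²) coordinates, let c_{ij}, c_{ij'} ∈ ℝ^p be fixed vectors with c_{jj'} := c_{ij'} − c_{ij}, and set A_{ij} = ‖c_{ij} + ε_i − ε_j‖₂, A_{ij'} = ‖c_{ij'} + ε_i − ε_{j'}‖₂, and λ_{jj'} = ‖c_{jj'}‖₂/(√2 σ). Then Var(A_{ij} + A_{ij'}) ≥ 2σ²(p + λ_{jj'}²) − (E(A_{ij}) + E(A_{ij'}))². -/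
open MeasureTheory ProbabilityTheory

/-- A family of random vectors in `ℝ^p` such that all coordinates (across the whole family)
are mutually independent and each coordinate is Gaussian `N(0, σ²)`. -/
def IIDGaussianCoords {Ω : Type*} [MeasurableSpace Ω] (P : Measure Ω)
    {ι : Type*} {p : ℕ} (σ : ℝ) (ε : ι → Ω → EuclideanSpace ℝ (Fin p)) : Prop :=
  (∀ i, Measurable (ε i)) ∧
  iIndepFun (fun q : ι × Fin p => fun ω => ε q.1 ω q.2) P ∧
  ∀ i k, Measure.map (fun ω => ε i ω k) P = gaussianReal 0 ⟨σ ^ 2, sq_nonneg σ⟩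

/-! The triangle inequality gives `A_ij + A_ij' ≥ ‖c_jj' + ε_j - ε_j'‖` pointwise. Each coordinate
of `c_jj' + ε_j - ε_j'` is Gaussian with variance `2σ²`, so the right-hand side has second moment
`‖c_jj'‖² + 2pσ² ≥ 2σ²(p + λ_jj'²)`, which bounds `E (A_ij + A_ij')²` from below; the mean of
`A_ij + A_ij'` is `E A_ij + E A_ij'` because both norms are square integrable. -/

open scoped NNReal

namespace ProbabilityTheory

variable {Ω : Type*} [MeasurableSpace Ω] {P : Measure Ω}

lemma integral_sq_gaussianReal (μ : ℝ) (v : ℝ≥0) :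
    ∫ x, x ^ 2 ∂gaussianReal μ v = μ ^ 2 + v := by
  have h := variance_eq_sub (memLp_id_gaussianReal (μ := μ) (v := v) 2)
  simp only [variance_id_gaussianReal, Pi.pow_apply, id_eq, integral_id_gaussianReal] at h
  linarith

lemma HasLaw.integral_sq_gaussianReal {X : Ω → ℝ} {μ : ℝ} {v : ℝ≥0}
    (hX : HasLaw X (gaussianReal μ v) P) : ∫ ω, X ω ^ 2 ∂P = μ ^ 2 + v := by
  rw [← ProbabilityTheory.integral_sq_gaussianReal μ v, ← hX.integral_comp (by fun_prop)]
  rfl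

-- Stated for `v : ℝ≥0` because at `gaussianReal 0 ⟨σ ^ 2, _⟩`, whose anonymous constructor
-- elaborates at type `{r // 0 ≤ r}`, the `IsGaussian` instance is not found.
lemma HasLaw.memLp_two_of_gaussianReal {X : Ω → ℝ} {μ : ℝ} {v : ℝ≥0}
    (hX : HasLaw X (gaussianReal μ v) P) : MemLp X 2 P :=
  hX.hasGaussianLaw.memLp_two

lemma IndepFun.hasLaw_sub_gaussianReal {X Y : Ω → ℝ} {μ₁ μ₂ : ℝ} {v₁ v₂ : ℝ≥0}
    (hX : HasLaw X (gaussianReal μ₁ v₁) P) (hY : HasLaw Y (gaussianReal μ₂ v₂) P)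
    (hXY : IndepFun X Y P) :
    HasLaw (fun ω ↦ X ω - Y ω) (gaussianReal (μ₁ - μ₂) (v₁ + v₂)) P := by
  simpa [gaussianReal_conv_gaussianReal, sub_eq_add_neg] using
    hXY.neg_right.hasLaw_fun_add hX (gaussianReal_neg hY)

end ProbabilityTheory

lemma integral_norm_const_add_sub_sq {Ω : Type*} [MeasurableSpace Ω] {P : Measure Ω}
    [IsProbabilityMeasure P] {ι : Type*} [Fintype ι] {X Y : Ω → EuclideanSpace ℝ ι} {v : ℝ≥0}
    (hX : ∀ k, HasLaw (fun ω ↦ X ω k) (gaussianReal 0 v) P)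
    (hY : ∀ k, HasLaw (fun ω ↦ Y ω k) (gaussianReal 0 v) P)
    (hXY : ∀ k, IndepFun (fun ω ↦ X ω k) (fun ω ↦ Y ω k) P) (c : EuclideanSpace ℝ ι) :
    ∫ ω, ‖c + X ω - Y ω‖ ^ 2 ∂P = ‖c‖ ^ 2 + 2 * Fintype.card ι * v := by
  have hcoord : ∀ k, HasLaw (fun ω ↦ c k + (X ω k - Y ω k)) (gaussianReal (c k) (v + v)) P :=
    fun k ↦ by
      simpa using gaussianReal_const_add ((hXY k).hasLaw_sub_gaussianReal (hX k) (hY k)) (c k)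
  simp_rw [EuclideanSpace.real_norm_sq_eq, PiLp.sub_apply, PiLp.add_apply, add_sub_assoc]
  rw [integral_finsetSum _ fun k _ ↦ (hcoord k).memLp_two_of_gaussianReal.integrable_sq]
  simp_rw [(hcoord _).integral_sq_gaussianReal, Finset.sum_add_distrib]
  simp only [NNReal.coe_add, Finset.sum_const, Finset.card_univ, smul_add, nsmul_eq_mul,
    add_right_inj]
  ring

lemma norm_sub_add_sub_le {E : Type*} [SeminormedAddCommGroup E] (c c' x y z : E) :
    ‖c' - c + y - z‖ ≤ ‖c + x - y‖ + ‖c' + x - z‖ :=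
  calc ‖c' - c + y - z‖ = ‖(c' + x - z) - (c + x - y)‖ := by congr 1; abel
    _ ≤ ‖c' + x - z‖ + ‖c + x - y‖ := norm_sub_le _ _
    _ = ‖c + x - y‖ + ‖c' + x - z‖ := add_comm _ _

lemma sq_mul_div_sq_le (a c : ℝ) : c ^ 2 * (a / c) ^ 2 ≤ a ^ 2 := by
  rcases eq_or_ne c 0 with rfl | hc
  · simpa using sq_nonneg a
  · rw [← mul_pow, mul_div_cancel₀ _ hc]

namespace IIDGaussianCoords

variable {Ω : Type*} [MeasurableSpace Ω] {P : Measure Ω} {ι : Type*} {p : ℕ} {σ : ℝ}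
  {ε : ι → Ω → EuclideanSpace ℝ (Fin p)}

lemma hasLaw (h : IIDGaussianCoords P σ ε) (i : ι) (k : Fin p) :
    HasLaw (fun ω ↦ ε i ω k) (gaussianReal 0 ⟨σ ^ 2, sq_nonneg σ⟩) P :=
  ⟨by have := h.1 i; fun_prop, h.2.2 i k⟩

lemma indepFun (h : IIDGaussianCoords P σ ε) {i j : ι} (hij : i ≠ j) (k : Fin p) :
    IndepFun (fun ω ↦ ε i ω k) (fun ω ↦ ε j ω k) P :=
  h.2.1.indepFun (i := (i, k)) (j := (j, k)) (by simp [hij])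

lemma memLp (h : IIDGaussianCoords P σ ε) (i : ι) : MemLp (ε i) 2 P := by
  rw [memLp_two_iff_integrable_sq_norm (h.1 i).aestronglyMeasurable]
  simp_rw [EuclideanSpace.real_norm_sq_eq]
  exact integrable_finsetSum _ fun k _ ↦ (h.hasLaw i k).memLp_two_of_gaussianReal.integrable_sq

end IIDGaussianCoords

theorem stmt_7_general {Ω : Type*} [MeasurableSpace Ω] (P : Measure Ω) [IsProbabilityMeasure P]
    (p : ℕ) (σ : ℝ)
    (ε : Fin 3 → Ω → EuclideanSpace ℝ (Fin p))
    (hiid : IIDGaussianCoords P σ ε)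
    (cij cij' : EuclideanSpace ℝ (Fin p)) :
    (∫ ω, (‖cij + ε 0 ω - ε 1 ω‖ + ‖cij' + ε 0 ω - ε 2 ω‖) ^ 2 ∂P)
        - (∫ ω, (‖cij + ε 0 ω - ε 1 ω‖ + ‖cij' + ε 0 ω - ε 2 ω‖) ∂P) ^ 2
      ≥ 2 * σ ^ 2 * (p + (‖cij' - cij‖ / (Real.sqrt 2 * σ)) ^ 2)
        - ((∫ ω, ‖cij + ε 0 ω - ε 1 ω‖ ∂P) + ∫ ω, ‖cij' + ε 0 ω - ε 2 ω‖ ∂P) ^ 2 := by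
  have memLp_norm : ∀ (c : EuclideanSpace ℝ (Fin p)) (i j : Fin 3),
      MemLp (fun ω ↦ ‖c + ε i ω - ε j ω‖) 2 P :=
    fun c i j ↦ (((memLp_const c).add (hiid.memLp i)).sub (hiid.memLp j)).norm
  have second_moment : ‖cij' - cij‖ ^ 2 + 2 * p * σ ^ 2
      ≤ ∫ ω, (‖cij + ε 0 ω - ε 1 ω‖ + ‖cij' + ε 0 ω - ε 2 ω‖) ^ 2 ∂P :=
    calc ‖cij' - cij‖ ^ 2 + 2 * p * σ ^ 2 = ∫ ω, ‖cij' - cij + ε 1 ω - ε 2 ω‖ ^ 2 ∂P := by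
          rw [integral_norm_const_add_sub_sq (hiid.hasLaw 1) (hiid.hasLaw 2)
            (hiid.indepFun (by decide)), Fintype.card_fin]
          rfl
      _ ≤ _ := integral_mono (memLp_norm _ 1 2).integrable_sq
          ((memLp_norm _ 0 1).add (memLp_norm _ 0 2)).integrable_sq fun ω ↦
            pow_le_pow_left₀ (norm_nonneg _) (norm_sub_add_sub_le _ _ _ _ _) 2
  have noncentrality : 2 * σ ^ 2 * (‖cij' - cij‖ / (Real.sqrt 2 * σ)) ^ 2 ≤ ‖cij' - cij‖ ^ 2 := by
    simpa [mul_pow] using sq_mul_div_sq_le ‖cij' - cij‖ (Real.sqrt 2 * σ)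
  rw [integral_add ((memLp_norm _ 0 1).integrable one_le_two)
    ((memLp_norm _ 0 2).integrable one_le_two)]
  linarith

theorem stmt_7 {Ω : Type*} [MeasurableSpace Ω] (P : Measure Ω) [IsProbabilityMeasure P]
    (p : ℕ) (hp : 1 ≤ p) (σ : ℝ) (hσ : 0 < σ)
    (ε : Fin 3 → Ω → EuclideanSpace ℝ (Fin p))
    (hiid : IIDGaussianCoords P σ ε)
    (cij cij' : EuclideanSpace ℝ (Fin p)) :
    (∫ ω, (‖cij + ε 0 ω - ε 1 ω‖ + ‖cij' + ε 0 ω - ε 2 ω‖) ^ 2 ∂P)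
        - (∫ ω, (‖cij + ε 0 ω - ε 1 ω‖ + ‖cij' + ε 0 ω - ε 2 ω‖) ∂P) ^ 2
      ≥ 2 * σ ^ 2 * (p + (‖cij' - cij‖ / (Real.sqrt 2 * σ)) ^ 2)
        - ((∫ ω, ‖cij + ε 0 ω - ε 1 ω‖ ∂P) + ∫ ω, ‖cij' + ε 0 ω - ε 2 ω‖ ∂P) ^ 2 :=
  stmt_7_general P p σ ε hiid cij cij'
end

section
/- Let ε_i, ε_j, ε_{j'} be three mutually independent random vectors in ℝ^p with i.i.d. N(0,σ²) coordinates, let c_{ij}, c_{ij'} ∈ ℝ^p be fixed vectors with c_{jj'} := c_{ij'} − c_{ij}, and set A_{ij} = ‖c_{ij} + ε_i − ε_j‖₂, A_{ij'} = ‖c_{ij'} + ε_i − ε_{j'}‖₂, λ_{ij} = ‖c_{ij}‖₂/(√2 σ), λ_{ij'} = ‖c_{ij'}‖₂/(√2 σ), λ_{jj'} = ‖c_{jj'}‖₂/(√2 σ). Then E(A_{ij} A_{ij'}) ≥ −σ²(p + λ_{ij}² + λ_{ij'}² − λ_{jj'}²). -/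
open MeasureTheory ProbabilityTheory

/-!
With `U = c_{ij} + ε_i - ε_j` and `W = c_{ij'} + ε_i - ε_{j'}` we have
`W - U = c_{jj'} + ε_j - ε_{j'}`, and the triangle inequality `‖W - U‖ ≤ ‖U‖ + ‖W‖` gives
`2 A_{ij} A_{ij'} ≥ ‖W - U‖² - ‖U‖² - ‖W‖²`. Each of the three second moments is explicit:
for `a ≠ b`, coordinatewise independence gives `E ‖c + ε_a - ε_b‖² = ‖c‖² + 2pσ²`.
Taking expectations, the three `2pσ²` terms combine to `-pσ²`.
-/

section Moments

variable {Ω : Type*} {mΩ : MeasurableSpace Ω} {μ : Measure Ω}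

lemma integral_const_add_sub_sq_of_indepFun [IsProbabilityMeasure μ] {X Y : Ω → ℝ}
    (hX : MemLp X 2 μ) (hY : MemLp Y 2 μ) (hXY : X ⟂ᵢ[μ] Y) (t : ℝ) :
    ∫ ω, (t + X ω - Y ω) ^ 2 ∂μ = (t + μ[X] - μ[Y]) ^ 2 + Var[X; μ] + Var[Y; μ] := by
  have hZ : MemLp (fun ω => t + X ω - Y ω) 2 μ := ((memLp_const t).add hX).sub hY
  have hXi := hX.integrable one_le_two
  have hmean : ∫ ω, t + X ω - Y ω ∂μ = t + μ[X] - μ[Y] := by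
    rw [integral_sub (f := fun ω => t + X ω) ((integrable_const t).fun_add hXi)
      (hY.integrable one_le_two), integral_add (integrable_const t) hXi, integral_const]
    simp
  have hvar : Var[fun ω => t + X ω - Y ω; μ] = Var[X; μ] + Var[Y; μ] := calc
    _ = Var[fun ω => X ω - Y ω; μ] := by
      simp_rw [add_sub_assoc]
      exact variance_const_add (hX.1.sub hY.1) t
    _ = Var[X; μ] + Var[Y; μ] := by
      rw [variance_fun_sub hX hY, hXY.covariance_eq_zero hX hY]
      ring
  have hsq := variance_eq_sub hZ
  simp only [Pi.pow_apply] at hsq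
  rw [hvar, hmean] at hsq
  linarith

lemma integral_norm_sub_sq_le {E : Type*} [SeminormedAddCommGroup E] {U W : Ω → E}
    (hU : AEStronglyMeasurable U μ) (hW : AEStronglyMeasurable W μ)
    (hU2 : Integrable (fun ω => ‖U ω‖ ^ 2) μ) (hW2 : Integrable (fun ω => ‖W ω‖ ^ 2) μ)
    (hWU2 : Integrable (fun ω => ‖W ω - U ω‖ ^ 2) μ) :
    ∫ ω, ‖W ω - U ω‖ ^ 2 ∂μ
      ≤ ∫ ω, ‖U ω‖ ^ 2 ∂μ + ∫ ω, ‖W ω‖ ^ 2 ∂μ + 2 * ∫ ω, ‖U ω‖ * ‖W ω‖ ∂μ := by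
  have hUW : Integrable (fun ω => ‖U ω‖ * ‖W ω‖) μ := by
    refine (hU2.fun_add hW2).mono' (hU.norm.mul hW.norm) (ae_of_all _ fun ω => ?_)
    rw [Real.norm_eq_abs, abs_of_nonneg (by positivity)]
    nlinarith [sq_nonneg (‖U ω‖ - ‖W ω‖)]
  rw [← integral_add hU2 hW2, ← integral_const_mul,
    ← integral_add (hU2.fun_add hW2) (hUW.const_mul 2)]
  refine integral_mono hWU2 ((hU2.fun_add hW2).fun_add (hUW.const_mul 2)) fun ω => ?_
  calc ‖W ω - U ω‖ ^ 2 ≤ (‖U ω‖ + ‖W ω‖) ^ 2 := by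
        gcongr
        exact (norm_sub_le _ _).trans_eq (add_comm _ _)
    _ = ‖U ω‖ ^ 2 + ‖W ω‖ ^ 2 + 2 * (‖U ω‖ * ‖W ω‖) := by ring

end Moments

namespace IIDGaussianCoords

variable {Ω : Type*} [MeasurableSpace Ω] {P : Measure Ω} {ι : Type*} {p : ℕ} {σ : ℝ}
  {ε : ι → Ω → EuclideanSpace ℝ (Fin p)}

lemma measurable_coord (h : IIDGaussianCoords P σ ε) (i : ι) (k : Fin p) :
    Measurable fun ω => ε i ω k := by
  have := h.1 i
  fun_prop

lemma hasLaw_coord (h : IIDGaussianCoords P σ ε) (i : ι) (k : Fin p) :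
    HasLaw (fun ω => ε i ω k) (gaussianReal 0 ⟨σ ^ 2, sq_nonneg σ⟩) P :=
  ⟨(h.measurable_coord i k).aemeasurable, h.2.2 i k⟩

lemma memLp_coord (h : IIDGaussianCoords P σ ε) (i : ι) (k : Fin p) :
    MemLp (fun ω => ε i ω k) 2 P := by
  have hlaw := h.hasLaw_coord i k
  have hid : MemLp (id : ℝ → ℝ) 2 (P.map fun ω => ε i ω k) :=
    hlaw.map_eq ▸ memLp_id_gaussianReal 2
  exact (memLp_map_measure_iff aestronglyMeasurable_id hlaw.aemeasurable).1 hid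

lemma integral_coord (h : IIDGaussianCoords P σ ε) (i : ι) (k : Fin p) :
    P[fun ω => ε i ω k] = 0 :=
  (h.hasLaw_coord i k).integral_eq.trans integral_id_gaussianReal

lemma variance_coord (h : IIDGaussianCoords P σ ε) (i : ι) (k : Fin p) :
    Var[fun ω => ε i ω k; P] = σ ^ 2 :=
  (h.hasLaw_coord i k).variance_eq.trans variance_id_gaussianReal

lemma indepFun_coord (h : IIDGaussianCoords P σ ε) {i j : ι} (hij : i ≠ j) (k : Fin p) :
    (fun ω => ε i ω k) ⟂ᵢ[P] (fun ω => ε j ω k) :=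
  h.2.1.indepFun (i := (i, k)) (j := (j, k)) (by simp [hij])

lemma memLp_const_add_coord_sub_coord (h : IIDGaussianCoords P σ ε) [IsFiniteMeasure P]
    (a b : ι) (t : ℝ) (k : Fin p) :
    MemLp (fun ω => t + ε a ω k - ε b ω k) 2 P :=
  ((memLp_const t).add (h.memLp_coord a k)).sub (h.memLp_coord b k)

lemma integrable_norm_add_sub_sq (h : IIDGaussianCoords P σ ε) [IsFiniteMeasure P] (a b : ι)
    (c : EuclideanSpace ℝ (Fin p)) :
    Integrable (fun ω => ‖c + ε a ω - ε b ω‖ ^ 2) P := by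
  simp only [EuclideanSpace.real_norm_sq_eq, PiLp.add_apply, PiLp.sub_apply]
  exact integrable_finsetSum _ fun k _ =>
    (h.memLp_const_add_coord_sub_coord a b (c k) k).integrable_sq

lemma integral_norm_add_sub_sq (h : IIDGaussianCoords P σ ε) [IsProbabilityMeasure P]
    {a b : ι} (hab : a ≠ b) (c : EuclideanSpace ℝ (Fin p)) :
    ∫ ω, ‖c + ε a ω - ε b ω‖ ^ 2 ∂P = ‖c‖ ^ 2 + 2 * p * σ ^ 2 := by
  have hcoord (k : Fin p) : ∫ ω, (c k + ε a ω k - ε b ω k) ^ 2 ∂P = c k ^ 2 + 2 * σ ^ 2 := by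
    rw [integral_const_add_sub_sq_of_indepFun (h.memLp_coord a k) (h.memLp_coord b k)
      (h.indepFun_coord hab k), h.integral_coord, h.integral_coord, h.variance_coord,
      h.variance_coord]
    ring
  simp only [EuclideanSpace.real_norm_sq_eq, PiLp.add_apply, PiLp.sub_apply]
  rw [integral_finsetSum _ fun k _ =>
    (h.memLp_const_add_coord_sub_coord a b (c k) k).integrable_sq]
  simp only [hcoord, Finset.sum_add_distrib, Finset.sum_const, Finset.card_univ,
    Fintype.card_fin, nsmul_eq_mul]
  ring

end IIDGaussianCoords

theorem stmt_9_general {Ω : Type*} [MeasurableSpace Ω] (P : Measure Ω) [IsProbabilityMeasure P]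
    (p : ℕ) (σ : ℝ) (hσ : 0 < σ)
    (ε : Fin 3 → Ω → EuclideanSpace ℝ (Fin p))
    (hiid : IIDGaussianCoords P σ ε)
    (cij cij' : EuclideanSpace ℝ (Fin p)) :
    ∫ ω, ‖cij + ε 0 ω - ε 1 ω‖ * ‖cij' + ε 0 ω - ε 2 ω‖ ∂P
      ≥ -(σ ^ 2) * (p + (‖cij‖ / (Real.sqrt 2 * σ)) ^ 2
            + (‖cij'‖ / (Real.sqrt 2 * σ)) ^ 2 - (‖cij' - cij‖ / (Real.sqrt 2 * σ)) ^ 2) := by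
  have hmeas := hiid.1
  have hdiff (ω : Ω) : (cij' + ε 0 ω - ε 2 ω) - (cij + ε 0 ω - ε 1 ω)
      = (cij' - cij) + ε 1 ω - ε 2 ω := by abel
  have htriangle := integral_norm_sub_sq_le (μ := P)
    (U := fun ω => cij + ε 0 ω - ε 1 ω) (W := fun ω => cij' + ε 0 ω - ε 2 ω)
    (by fun_prop) (by fun_prop) (hiid.integrable_norm_add_sub_sq 0 1 cij)
    (hiid.integrable_norm_add_sub_sq 0 2 cij')
    (by simpa only [hdiff] using hiid.integrable_norm_add_sub_sq 1 2 (cij' - cij))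
  simp only [hdiff, hiid.integral_norm_add_sub_sq (by decide : (0 : Fin 3) ≠ 1),
    hiid.integral_norm_add_sub_sq (by decide : (0 : Fin 3) ≠ 2),
    hiid.integral_norm_add_sub_sq (by decide : (1 : Fin 3) ≠ 2)] at htriangle
  have hscale (x : ℝ) : σ ^ 2 * (x / (Real.sqrt 2 * σ)) ^ 2 = x ^ 2 / 2 := by
    rw [div_pow, mul_pow, Real.sq_sqrt zero_le_two]
    field_simp
  rw [ge_iff_le, neg_mul, mul_sub, mul_add, mul_add, hscale, hscale, hscale]
  linarith

theorem stmt_9 {Ω : Type*} [MeasurableSpace Ω] (P : Measure Ω) [IsProbabilityMeasure P]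
    (p : ℕ) (hp : 1 ≤ p) (σ : ℝ) (hσ : 0 < σ)
    (ε : Fin 3 → Ω → EuclideanSpace ℝ (Fin p))
    (hiid : IIDGaussianCoords P σ ε)
    (cij cij' : EuclideanSpace ℝ (Fin p)) :
    ∫ ω, ‖cij + ε 0 ω - ε 1 ω‖ * ‖cij' + ε 0 ω - ε 2 ω‖ ∂P
      ≥ -(σ ^ 2) * (p + (‖cij‖ / (Real.sqrt 2 * σ)) ^ 2
            + (‖cij'‖ / (Real.sqrt 2 * σ)) ^ 2 - (‖cij' - cij‖ / (Real.sqrt 2 * σ)) ^ 2) :=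
  stmt_9_general P p σ hσ ε hiid cij cij'
end
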